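/- (Proposition 2.) Let Σ be a real symmetric positive definite 2×2 matrix, Γ an invertible real 2×2 matrix, and b ∈ ℝ². Let x_Σ be the inverse Fourier transform of ω ↦ exp(−ωᵀΣω) and let ψ be the inverse Fourier transform of ω ↦ exp(−‖Γω − b‖²) (both spectra are integrable, so x_Σ and ψ are well-defined continuous integrable functions, with x_Σ real-valued). Then there exists a constant c > 0 such that for every u ∈ ℝ², |(x_Σ ⋆ ψ)(u)| = c · (x_Σ ⋆ |ψ|)(u), where |ψ| denotes the pointwise complex modulus of ψ. -/

import Mathlib

/-!
Both spectra are Gaussians, so completing the square in the Fourier integral shows that `x_Σ` is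
a real Gaussian `k e^{-uᵀUu}` and `ψ` a modulated one `k' e^{-wᵀVw + i⟨a, w⟩}`, with
`U = (4Σ)⁻¹`, `V = (4ΓᵀΓ)⁻¹` and `a = Γ⁻¹b`. Up to the factor `k k' e^{-uᵀVu + i⟨a, u⟩}`,
`v ↦ x_Σ(v) ψ(u - v)` is then the Gaussian with quadratic form `U + V` and complex linear
coefficient `p + iq`, where `p = 2Vu` and `q = -a`. Since
`∫ e^{-vᵀCv + ⟨p + iq, v⟩} dv = K e^{(p + iq)ᵀC⁻¹(p + iq)/4}`, its modulus is
`K e^{pᵀC⁻¹p/4} e^{-qᵀC⁻¹q/4}`: the modulation only contributes the factor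
`c = e^{-aᵀ(U + V)⁻¹a/4}`, which does not depend on `u`.
-/

open Matrix MeasureTheory Complex
open scoped Real

/-- Inverse Fourier transform on ℝ² with the convention
`g^∨(u) = (2π)^{-2} ∫ g(ω) e^{i⟨u,ω⟩} dω`, where `⟨u,ω⟩ = u ⬝ᵥ ω` is the Euclidean
inner product. -/
noncomputable def invFourier (g : (Fin 2 → ℝ) → ℂ) (u : Fin 2 → ℝ) : ℂ :=
  (((2 * π) ^ 2 : ℝ)⁻¹ : ℂ) * ∫ ω : Fin 2 → ℝ, g ω * Complex.exp (Complex.I * ((u ⬝ᵥ ω : ℝ) : ℂ))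

section GaussianIntegral

variable {ι : Type*} [Fintype ι]

theorem integral_cexp_neg_dotProduct_self_add (p q : ι → ℝ) :
    ∫ v : ι → ℝ, cexp (↑(p ⬝ᵥ v - v ⬝ᵥ v) + ↑(q ⬝ᵥ v) * I) =
      ↑(π ^ (Fintype.card ι / 2 : ℝ)) *
        cexp (↑((p ⬝ᵥ p - q ⬝ᵥ q) / 4) + ↑(p ⬝ᵥ q / 2) * I) := by
  have h := GaussianFourier.integral_cexp_neg_mul_sum_add (b := 1) (by simp)
    (fun i => (p i : ℂ) + q i * I)
  convert h using 1
  · congr 1 with v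
    congr 1
    simp only [dotProduct, ofReal_sum, ofReal_sub, ofReal_mul, Finset.sum_mul, Finset.mul_sum,
      ← Finset.sum_add_distrib, ← Finset.sum_sub_distrib]
    exact Finset.sum_congr rfl fun i _ => by ring
  · rw [ofReal_cpow Real.pi_pos.le, div_one, mul_one]
    push_cast
    congr 2
    simp only [dotProduct, ofReal_sum, ofReal_mul, Finset.sum_mul, Finset.sum_div,
      ← Finset.sum_add_distrib, ← Finset.sum_sub_distrib]
    refine Finset.sum_congr rfl fun i _ => ?_
    linear_combination (-(q i : ℂ) ^ 2 / 4) * I_sq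

theorem norm_cexp_ofReal_add_ofReal_mul_I (x y : ℝ) : ‖cexp (↑x + ↑y * I)‖ = rexp x := by
  simp [norm_exp]

theorem Matrix.IsSymm.dotProduct_mulVec_comm {R : Type*} [CommSemiring R] {V : Matrix ι ι R}
    (hV : V.IsSymm) (u v : ι → R) :
    v ⬝ᵥ V *ᵥ u = u ⬝ᵥ V *ᵥ v := by
  rw [dotProduct_mulVec, dotProduct_comm, ← mulVec_transpose, hV.eq]

theorem Matrix.IsSymm.sub_dotProduct_mulVec_sub {R : Type*} [CommRing R] {V : Matrix ι ι R}
    (hV : V.IsSymm) (u v : ι → R) :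
    (u - v) ⬝ᵥ V *ᵥ (u - v) = u ⬝ᵥ V *ᵥ u - 2 * (V *ᵥ u ⬝ᵥ v) + v ⬝ᵥ V *ᵥ v := by
  rw [mulVec_sub, sub_dotProduct, dotProduct_sub, dotProduct_sub, dotProduct_comm (V *ᵥ u) v,
    hV.dotProduct_mulVec_comm u v]
  ring

variable [DecidableEq ι]

theorem integral_comp_mulVec {E : Type*} [NormedAddCommGroup E] [NormedSpace ℝ E]
    {M : Matrix ι ι ℝ} (hM : IsUnit M) (f : (ι → ℝ) → E) :
    ∫ v, f (M *ᵥ v) = |M.det|⁻¹ • ∫ v, f v := by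
  have hemb : MeasurableEmbedding (toLin' M) :=
    (toLinearEquiv' M hM.invertible).toContinuousLinearEquiv.toHomeomorph.measurableEmbedding
  rw [show (fun v => f (M *ᵥ v)) = fun v => f (toLin' M v) from rfl, ← hemb.integral_map,
    Real.map_matrix_volume_pi_eq_smul_volume_pi (M.isUnit_iff_isUnit_det.mp hM).ne_zero,
    integral_smul_measure, ENNReal.toReal_ofReal (by positivity), abs_inv]

theorem integral_cexp_neg_mulVec_dotProduct_self_add {P : Matrix ι ι ℝ} (hP : IsUnit P)
    (p q : ι → ℝ) :
    ∫ v : ι → ℝ, cexp (↑(p ⬝ᵥ v - P *ᵥ v ⬝ᵥ P *ᵥ v) + ↑(q ⬝ᵥ v) * I) =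
      ↑(π ^ (Fintype.card ι / 2 : ℝ) / |P.det|) *
        cexp (↑((p ᵥ* P⁻¹ ⬝ᵥ p ᵥ* P⁻¹ - q ᵥ* P⁻¹ ⬝ᵥ q ᵥ* P⁻¹) / 4) +
          ↑(p ᵥ* P⁻¹ ⬝ᵥ q ᵥ* P⁻¹ / 2) * I) := by
  have hdot (r v : ι → ℝ) : r ⬝ᵥ v = r ᵥ* P⁻¹ ⬝ᵥ P *ᵥ v := by
    rw [← dotProduct_mulVec, mulVec_mulVec,
      nonsing_inv_mul _ (P.isUnit_iff_isUnit_det.mp hP), one_mulVec]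
  simp_rw [hdot p, hdot q]
  rw [integral_comp_mulVec hP
      (fun w => cexp (↑(p ᵥ* P⁻¹ ⬝ᵥ w - w ⬝ᵥ w) + ↑(q ᵥ* P⁻¹ ⬝ᵥ w) * I)),
    integral_cexp_neg_dotProduct_self_add, real_smul]
  push_cast
  ring

theorem dotProduct_transpose_mul_self_inv_mulVec {R : Type*} [CommRing R] (P : Matrix ι ι R)
    (r s : ι → R) :
    r ⬝ᵥ (Pᵀ * P)⁻¹ *ᵥ s = r ᵥ* P⁻¹ ⬝ᵥ s ᵥ* P⁻¹ := by
  rw [Matrix.mul_inv_rev, ← transpose_nonsing_inv, ← mulVec_mulVec, dotProduct_mulVec,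
    mulVec_transpose]

theorem dotProduct_smul_inv_mulVec {K : Type*} [Field K] {M : Matrix ι ι K} (hM : IsUnit M)
    {c : K} (hc : c ≠ 0) (r s : ι → K) : r ⬝ᵥ (c • M)⁻¹ *ᵥ s = r ⬝ᵥ M⁻¹ *ᵥ s / c := by
  have := invertibleOfNonzero hc
  rw [Matrix.inv_smul M c (M.isUnit_iff_isUnit_det.mp hM), invOf_eq_inv, smul_mulVec,
    dotProduct_smul, smul_eq_mul, inv_mul_eq_div]

open scoped MatrixOrder in
theorem Matrix.PosDef.exists_transpose_mul_self_eq {C : Matrix ι ι ℝ} (hC : C.PosDef) :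
    ∃ P : Matrix ι ι ℝ, IsUnit P ∧ Pᵀ * P = C := by
  have hsymm : (CFC.sqrt C)ᵀ = CFC.sqrt C := (CFC.sqrt_nonneg C).posSemidef.isHermitian
  have hsq : CFC.sqrt C * CFC.sqrt C = C := CFC.sqrt_mul_sqrt_self C hC.posSemidef.nonneg
  refine ⟨CFC.sqrt C, ?_, by rw [hsymm, hsq]⟩
  rw [isUnit_iff_isUnit_det, isUnit_iff_ne_zero]
  intro h
  have := congrArg det hsq
  rw [det_mul, h, mul_zero] at this
  exact hC.det_pos.ne this

theorem integral_cexp_neg_dotProduct_mulVec_add {C : Matrix ι ι ℝ} (hC : C.PosDef)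
    (p q : ι → ℝ) :
    ∫ v : ι → ℝ, cexp (↑(p ⬝ᵥ v - v ⬝ᵥ C *ᵥ v) + ↑(q ⬝ᵥ v) * I) =
      ↑(π ^ (Fintype.card ι / 2 : ℝ) / √C.det) *
        cexp (↑((p ⬝ᵥ C⁻¹ *ᵥ p - q ⬝ᵥ C⁻¹ *ᵥ q) / 4) + ↑(p ⬝ᵥ C⁻¹ *ᵥ q / 2) * I) := by
  obtain ⟨P, hP, rfl⟩ := hC.exists_transpose_mul_self_eq
  have hquad (v : ι → ℝ) : v ⬝ᵥ (Pᵀ * P) *ᵥ v = P *ᵥ v ⬝ᵥ P *ᵥ v := by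
    rw [← mulVec_mulVec, dotProduct_mulVec, vecMul_transpose]
  have hdet : √(Pᵀ * P).det = |P.det| := by
    rw [det_mul, det_transpose, ← sq, Real.sqrt_sq_eq_abs]
  simp_rw [hquad, dotProduct_transpose_mul_self_inv_mulVec, hdet]
  exact integral_cexp_neg_mulVec_dotProduct_self_add hP p q

theorem norm_integral_cexp_neg_dotProduct_mulVec_add {C : Matrix ι ι ℝ} (hC : C.PosDef)
    (p q : ι → ℝ) :
    ((‖∫ v : ι → ℝ, cexp (↑(p ⬝ᵥ v - v ⬝ᵥ C *ᵥ v) + ↑(q ⬝ᵥ v) * I)‖ : ℝ) : ℂ) =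
      ↑(rexp (-(q ⬝ᵥ C⁻¹ *ᵥ q) / 4)) * ∫ v : ι → ℝ, cexp ↑(p ⬝ᵥ v - v ⬝ᵥ C *ᵥ v) := by
  have h0 := integral_cexp_neg_dotProduct_mulVec_add hC p 0
  simp only [zero_dotProduct, ofReal_zero, zero_mul, add_zero, mulVec_zero, dotProduct_zero,
    sub_zero, zero_div] at h0
  rw [integral_cexp_neg_dotProduct_mulVec_add hC, h0, norm_mul, norm_cexp_ofReal_add_ofReal_mul_I,
    norm_real, Real.norm_of_nonneg (by positivity), ← ofReal_exp, sub_div, sub_eq_neg_add,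
    Real.exp_add, neg_div]
  push_cast
  ring

theorem norm_gaussian_convolution_modulated_gaussian {U V : Matrix ι ι ℝ} (hU : U.PosDef)
    (hV : V.PosDef) (a u : ι → ℝ) :
    ((‖∫ v, cexp (-↑(v ⬝ᵥ U *ᵥ v)) *
        cexp (-↑((u - v) ⬝ᵥ V *ᵥ (u - v)) + ↑(a ⬝ᵥ (u - v)) * I)‖ : ℝ) : ℂ) =
      ↑(rexp (-(a ⬝ᵥ (U + V)⁻¹ *ᵥ a) / 4)) *
        ∫ v, cexp (-↑(v ⬝ᵥ U *ᵥ v)) * cexp (-↑((u - v) ⬝ᵥ V *ᵥ (u - v))) := by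
  have hV' : V.IsSymm := isHermitian_iff_isSymm.mp hV.isHermitian
  have hsplit (a v : ι → ℝ) :
      cexp (-↑(v ⬝ᵥ U *ᵥ v)) * cexp (-↑((u - v) ⬝ᵥ V *ᵥ (u - v)) + ↑(a ⬝ᵥ (u - v)) * I) =
        cexp (↑(-(u ⬝ᵥ V *ᵥ u)) + ↑(a ⬝ᵥ u) * I) *
          cexp (↑((2 • V *ᵥ u) ⬝ᵥ v - v ⬝ᵥ (U + V) *ᵥ v) + ↑(-a ⬝ᵥ v) * I) := by
    rw [← exp_add, ← exp_add, hV'.sub_dotProduct_mulVec_sub]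
    congr 1
    simp only [dotProduct_sub, add_mulVec, dotProduct_add, smul_dotProduct, neg_dotProduct]
    push_cast
    ring
  have hsplit0 (v : ι → ℝ) :
      cexp (-↑(v ⬝ᵥ U *ᵥ v)) * cexp (-↑((u - v) ⬝ᵥ V *ᵥ (u - v))) =
        cexp ↑(-(u ⬝ᵥ V *ᵥ u)) * cexp ↑((2 • V *ᵥ u) ⬝ᵥ v - v ⬝ᵥ (U + V) *ᵥ v) := by
    simpa using hsplit 0 v
  simp_rw [hsplit a, hsplit0]
  rw [integral_const_mul, integral_const_mul, norm_mul, ofReal_mul,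
    norm_integral_cexp_neg_dotProduct_mulVec_add (hU.add hV), norm_cexp_ofReal_add_ofReal_mul_I,
    ofReal_exp, mulVec_neg, dotProduct_neg, neg_dotProduct, neg_neg]
  ring

end GaussianIntegral

theorem invFourier_gaussian {C : Matrix (Fin 2) (Fin 2) ℝ} (hC : C.PosDef) (u : Fin 2 → ℝ) :
    invFourier (fun ω => cexp (-↑(ω ⬝ᵥ C *ᵥ ω))) u =
      ((π / ((2 * π) ^ 2 * √C.det) : ℝ) : ℂ) * cexp (-↑(u ⬝ᵥ ((4 : ℝ) • C)⁻¹ *ᵥ u)) := by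
  have hintegrand (ω : Fin 2 → ℝ) : cexp (-↑(ω ⬝ᵥ C *ᵥ ω)) * cexp (I * ↑(u ⬝ᵥ ω)) =
      cexp (↑(0 ⬝ᵥ ω - ω ⬝ᵥ C *ᵥ ω) + ↑(u ⬝ᵥ ω) * I) := by
    rw [← exp_add, zero_dotProduct, zero_sub, ofReal_neg, mul_comm I]
  simp only [invFourier, hintegrand]
  rw [integral_cexp_neg_dotProduct_mulVec_add hC,
    dotProduct_smul_inv_mulVec hC.isUnit four_ne_zero]
  simp only [mulVec_zero, dotProduct_zero, zero_dotProduct, Fintype.card_fin, Nat.cast_ofNat,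
    div_self (two_ne_zero : (2 : ℝ) ≠ 0), Real.rpow_one, zero_sub, zero_div, ofReal_zero,
    zero_mul, add_zero, neg_div]
  push_cast
  ring

theorem invFourier_gaussian_sub {Γ : Matrix (Fin 2) (Fin 2) ℝ} (hΓ : IsUnit Γ) (b u : Fin 2 → ℝ) :
    invFourier (fun ω => cexp (-↑((Γ *ᵥ ω - b) ⬝ᵥ (Γ *ᵥ ω - b)))) u =
      ((π / ((2 * π) ^ 2 * |Γ.det|) : ℝ) : ℂ) *
        cexp (-↑(u ⬝ᵥ ((4 : ℝ) • (Γᵀ * Γ))⁻¹ *ᵥ u) + ↑(Γ⁻¹ *ᵥ b ⬝ᵥ u) * I) := by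
  have hintegrand (ω : Fin 2 → ℝ) :
      cexp (-↑((Γ *ᵥ ω - b) ⬝ᵥ (Γ *ᵥ ω - b))) * cexp (I * ↑(u ⬝ᵥ ω)) =
        cexp (-↑(b ⬝ᵥ b)) *
          cexp (↑((2 : ℝ) • (b ᵥ* Γ) ⬝ᵥ ω - Γ *ᵥ ω ⬝ᵥ Γ *ᵥ ω) + ↑(u ⬝ᵥ ω) * I) := by
    rw [← exp_add, ← exp_add, sub_dotProduct, dotProduct_sub, dotProduct_sub,
      dotProduct_comm (Γ *ᵥ ω) b, dotProduct_mulVec b, smul_dotProduct, smul_eq_mul]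
    push_cast
    ring_nf
  have hΓΓ : IsUnit (Γᵀ * Γ) := ((isUnit_transpose Γ).mpr hΓ).mul hΓ
  have hvecMul : ((2 : ℝ) • (b ᵥ* Γ)) ᵥ* Γ⁻¹ = (2 : ℝ) • b := by
    rw [smul_vecMul, vecMul_vecMul, mul_nonsing_inv _ (Γ.isUnit_iff_isUnit_det.mp hΓ), vecMul_one]
  have hphase : Γ⁻¹ *ᵥ b ⬝ᵥ u = b ⬝ᵥ u ᵥ* Γ⁻¹ := by
    rw [dotProduct_comm, dotProduct_mulVec, dotProduct_comm]
  simp only [invFourier, hintegrand]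
  rw [integral_const_mul, integral_cexp_neg_mulVec_dotProduct_self_add hΓ, hvecMul,
    dotProduct_smul_inv_mulVec hΓΓ four_ne_zero, dotProduct_transpose_mul_self_inv_mulVec, hphase]
  simp only [smul_dotProduct, dotProduct_smul, smul_eq_mul, Fintype.card_fin, Nat.cast_ofNat,
    div_self (two_ne_zero : (2 : ℝ) ≠ 0), Real.rpow_one]
  rw [mul_left_comm (cexp _), ← exp_add, ← mul_assoc]
  congr 2 <;> push_cast <;> ring

theorem stmt12_general (S Γ : Matrix (Fin 2) (Fin 2) ℝ)
    (hS' : S.PosDef) (hΓ : IsUnit Γ) (b : Fin 2 → ℝ)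
    (xS ψ : (Fin 2 → ℝ) → ℂ)
    (hxS : xS = invFourier (fun ω => Complex.exp (-((ω ⬝ᵥ (S *ᵥ ω) : ℝ) : ℂ))))
    (hψ : ψ = invFourier (fun ω =>
      Complex.exp (-(((Γ *ᵥ ω - b) ⬝ᵥ (Γ *ᵥ ω - b) : ℝ) : ℂ)))) :
    ∃ c : ℝ, 0 < c ∧ ∀ u : Fin 2 → ℝ,
      ((‖∫ v : Fin 2 → ℝ, xS v * ψ (u - v)‖ : ℝ) : ℂ) =
        (c : ℂ) * ∫ v : Fin 2 → ℝ, xS v * ((‖ψ (u - v)‖ : ℝ) : ℂ) := by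
  set U := ((4 : ℝ) • S)⁻¹
  set V := ((4 : ℝ) • (Γᵀ * Γ))⁻¹
  set a := Γ⁻¹ *ᵥ b
  set kx := π / ((2 * π) ^ 2 * √S.det)
  set kψ := π / ((2 * π) ^ 2 * |Γ.det|)
  have hU : U.PosDef := (hS'.smul four_pos).inv
  have hV : V.PosDef :=
    ((PosDef.conjTranspose_mul_self Γ (mulVec_injective_iff_isUnit.mpr hΓ)).smul four_pos).inv
  have hxS' (v : Fin 2 → ℝ) : xS v = kx * cexp (-↑(v ⬝ᵥ U *ᵥ v)) := by
    rw [hxS, invFourier_gaussian hS']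
  have hψ' (w : Fin 2 → ℝ) : ψ w = kψ * cexp (-↑(w ⬝ᵥ V *ᵥ w) + ↑(a ⬝ᵥ w) * I) := by
    rw [hψ, invFourier_gaussian_sub hΓ]
  have hnormψ (w : Fin 2 → ℝ) : ((‖ψ w‖ : ℝ) : ℂ) = kψ * cexp (-↑(w ⬝ᵥ V *ᵥ w)) := by
    rw [hψ', norm_mul, ← ofReal_neg, norm_cexp_ofReal_add_ofReal_mul_I, norm_real,
      Real.norm_of_nonneg (by positivity), ofReal_mul, ofReal_exp]
  refine ⟨rexp (-(a ⬝ᵥ (U + V)⁻¹ *ᵥ a) / 4), Real.exp_pos _, fun u => ?_⟩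
  simp only [hnormψ]
  simp only [hxS', hψ', mul_mul_mul_comm (kx : ℂ), integral_const_mul, norm_mul, ← ofReal_mul,
    norm_real, Real.norm_of_nonneg (by positivity : 0 ≤ kx * kψ)]
  rw [ofReal_mul, norm_gaussian_convolution_modulated_gaussian hU hV]
  ring

/-- **Proposition 2.** Let `S` be symmetric positive definite, `Γ` invertible
and `b ∈ ℝ²`. Let `xS` be the inverse Fourier transform of `ω ↦ exp(-ωᵀSω)` (a Gaussian blob)
and `ψ` that of `ω ↦ exp(-‖Γω - b‖²)` (a Gábor-type filter). Then there is a constant `c > 0`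
such that `|(xS ⋆ ψ)(u)| = c · (xS ⋆ |ψ|)(u)` for every `u`, where
`(f ⋆ g)(u) = ∫ f(v) g(u-v) dv` and `|ψ|` is the pointwise complex modulus of `ψ`. -/
theorem stmt12 (S Γ : Matrix (Fin 2) (Fin 2) ℝ)
    (hS : S.IsSymm) (hS' : S.PosDef) (hΓ : IsUnit Γ) (b : Fin 2 → ℝ)
    (xS ψ : (Fin 2 → ℝ) → ℂ)
    (hxS : xS = invFourier (fun ω => Complex.exp (-((ω ⬝ᵥ (S *ᵥ ω) : ℝ) : ℂ))))
    (hψ : ψ = invFourier (fun ω =>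
      Complex.exp (-(((Γ *ᵥ ω - b) ⬝ᵥ (Γ *ᵥ ω - b) : ℝ) : ℂ)))) :
    ∃ c : ℝ, 0 < c ∧ ∀ u : Fin 2 → ℝ,
      ((‖∫ v : Fin 2 → ℝ, xS v * ψ (u - v)‖ : ℝ) : ℂ) =
        (c : ℂ) * ∫ v : Fin 2 → ℝ, xS v * ((‖ψ (u - v)‖ : ℝ) : ℂ) :=
  stmt12_general S Γ hS' hΓ b xS ψ hxS hψ
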